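/- Fix 4 < p ≤ 6, let 0 < δ₁ ≤ 1/2 + 3/p and 0 < δ₂ ≤ 1, and let (ξ, ξ+2/p) be an interval at level n with ξ > 0; set m_ξ = ξ + 1/2 − 1/p. Assume τ is a sequence in T(δ₁, δ₂) such that τ_n ≤ ξ, τ_{n+1} = m_ξ + 4/p and τ_{n+2} ≥ ξ + 1 + 2/p. Let γ be the sequence with γ_{n+1} = m_ξ and γ_k = τ_k for all k ≠ n+1. Then E_p(τ) < E_p(γ). -/

import Mathlib

/-!
Lowering `τ (n+1)` from `m_ξ + 4/p` to `m_ξ` changes `K_p` only on `(m_ξ, m_ξ + 4/p)`, where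
the level-`n` branch is replaced by the level-`n+1` branch. The level condition turns
`sin (pπ(x-n)/2)` into `sin (pπ(x-ξ)/2)`, so with `Φ t = (max 0 (sin (pπt/2)))²` the gain
`E_p(γ) - E_p(τ)` is `∫ (Φ(x-ξ-1) - Φ(x-ξ)) / (πx)²` over this interval. It is a full period of
`Φ`, so the bracket has mean zero; it is nonnegative before `ξ + 4/p`, nonpositive after, and
positive on `(ξ + 2/p, ξ + 1 - 2/p)`. Against the strictly decreasing weight `(πx)⁻²` such a
function has positive integral.
-/

open MeasureTheory Real Set

/-- The kernel `K_p(τ; x)`. -/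
noncomputable def Kp (p : ℝ) (τ : ℕ → ℝ) (x : ℝ) : ℝ :=
  ∑' n : ℕ, (Set.Ioo (τ n) (τ (n + 1))).indicator
    (fun y => Real.sin (p / 2 * π * (y - n)) / (π * y)) x

/-- The quantity `E_p(τ)`. -/
noncomputable def Ep (p : ℝ) (τ : ℕ → ℝ) : ℝ :=
  ∫ x in Set.Ioi (0 : ℝ), (max 0 (Kp p τ x)) ^ 2

/-- The set of sequences `T(δ₁, δ₂)`. -/
def Tset (δ₁ δ₂ : ℝ) : Set (ℕ → ℝ) :=
  {τ | τ 0 = 0 ∧ StrictMono τ ∧ δ₁ ≤ τ 1 ∧ ∀ n, 1 ≤ n → δ₂ ≤ τ (n + 1) - τ n}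

/-- The supremum `ℰ_p(δ₁, δ₂) = sup_{τ ∈ T(δ₁,δ₂)} E_p(τ)`. -/
noncomputable def Esup (p δ₁ δ₂ : ℝ) : ℝ := sSup (Ep p '' Tset δ₁ δ₂)

/-- `(ξ, ξ + 2/p)` is an *interval at level `n`*, i.e. a connected component of
`{x : ℝ | sin ((p/2) π (x - n)) > 0}`. -/
def IntervalAtLevel (p : ℝ) (n : ℕ) (ξ : ℝ) : Prop :=
  ∃ x ∈ {y : ℝ | 0 < Real.sin (p / 2 * π * (y - n))},
    connectedComponentIn {y : ℝ | 0 < Real.sin (p / 2 * π * (y - n))} x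
      = Set.Ioo ξ (ξ + 2 / p)

section Kernel

variable {p : ℝ} {σ σ' : ℕ → ℝ} {x : ℝ}

noncomputable def kernelTerm (p : ℝ) (σ : ℕ → ℝ) (k : ℕ) (x : ℝ) : ℝ :=
  (Ioo (σ k) (σ (k + 1))).indicator (fun y => sin (p / 2 * π * (y - k)) / (π * y)) x

lemma Kp_eq_tsum_kernelTerm : Kp p σ x = ∑' k, kernelTerm p σ k x := rfl

lemma kernelTerm_eq_zero_of_ne (hσ : Monotone σ) {k j : ℕ} (hx : x ∈ Ioo (σ k) (σ (k + 1)))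
    (hj : j ≠ k) : kernelTerm p σ j x = 0 := by
  have hdisj := hσ.pairwise_disjoint_on_Ioo_succ hj
  simp only [Function.onFun, Order.succ_eq_add_one] at hdisj
  exact indicator_of_notMem (fun hxj => disjoint_left.1 hdisj hxj hx) _

lemma Kp_eq_of_mem_Ioo (hσ : Monotone σ) {k : ℕ} (hx : x ∈ Ioo (σ k) (σ (k + 1))) :
    Kp p σ x = sin (p / 2 * π * (x - k)) / (π * x) := by
  rw [Kp_eq_tsum_kernelTerm, tsum_eq_single k fun j hj => kernelTerm_eq_zero_of_ne hσ hx hj]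
  exact indicator_of_mem hx _

lemma Kp_eq_zero_of_forall_notMem (hx : ∀ k, x ∉ Ioo (σ k) (σ (k + 1))) : Kp p σ x = 0 := by
  simp only [Kp_eq_tsum_kernelTerm, kernelTerm, indicator_of_notMem (hx _), tsum_zero]

lemma summable_kernelTerm (hσ : Monotone σ) (p x : ℝ) : Summable (kernelTerm p σ · x) := by
  by_cases hx : ∃ k, x ∈ Ioo (σ k) (σ (k + 1))
  · obtain ⟨k, hk⟩ := hx
    exact summable_of_ne_finset_zero (s := {k}) fun j hj =>
      kernelTerm_eq_zero_of_ne hσ hk (Finset.notMem_singleton.1 hj)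
  · push Not at hx
    exact summable_of_ne_finset_zero (s := ∅) fun j _ => indicator_of_notMem (hx j) _

lemma measurable_Kp (hσ : Monotone σ) (p : ℝ) : Measurable (Kp p σ) := by
  refine measurable_of_tendsto_metrizable (f := fun N x => ∑ k ∈ Finset.range N, kernelTerm p σ k x)
    (fun N => Finset.measurable_sum _ fun k _ => ?_)
    (tendsto_pi_nhds.2 fun x => (summable_kernelTerm hσ p x).hasSum.tendsto_sum_nat)
  exact (by fun_prop : Measurable fun y => sin (p / 2 * π * (y - k)) / (π * y)).indicator
    measurableSet_Ioo

lemma Kp_congr (h : ∀ k, (σ k < x ↔ σ' k < x) ∧ (x < σ k ↔ x < σ' k)) :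
    Kp p σ x = Kp p σ' x := by
  refine tsum_congr fun k => ?_
  have hmem : x ∈ Ioo (σ k) (σ (k + 1)) ↔ x ∈ Ioo (σ' k) (σ' (k + 1)) := by
    simp only [mem_Ioo, (h k).1, (h (k + 1)).2]
  by_cases hx : x ∈ Ioo (σ k) (σ (k + 1))
  · rw [indicator_of_mem hx, indicator_of_mem (hmem.1 hx)]
  · rw [indicator_of_notMem hx, indicator_of_notMem (mt hmem.2 hx)]

lemma abs_Kp_le_inv (hσ : Monotone σ) (hx : 0 < x) : |Kp p σ x| ≤ (π * x)⁻¹ := by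
  have hπx : 0 < π * x := by positivity
  by_cases h : ∃ k, x ∈ Ioo (σ k) (σ (k + 1))
  · obtain ⟨k, hk⟩ := h
    rw [Kp_eq_of_mem_Ioo hσ hk, abs_div, abs_of_pos hπx, div_eq_mul_inv]
    exact mul_le_of_le_one_left (inv_nonneg.2 hπx.le) (abs_sin_le_one _)
  · push Not at h
    rw [Kp_eq_zero_of_forall_notMem h, abs_zero]
    positivity

lemma abs_Kp_le_abs_div_two (hσ : Monotone σ) (hx : 0 < x) (hx1 : x ≤ σ 1) :
    |Kp p σ x| ≤ |p| / 2 := by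
  by_cases h : ∃ k, x ∈ Ioo (σ k) (σ (k + 1))
  · obtain ⟨k, hk⟩ := h
    obtain rfl : k = 0 := by
      by_contra hk0
      exact (hk.1.trans_le hx1).not_ge (hσ (Nat.one_le_iff_ne_zero.2 hk0))
    have hπx : 0 < π * x := by positivity
    rw [Kp_eq_of_mem_Ioo hσ hk, abs_div, abs_of_pos hπx, div_le_iff₀ hπx]
    calc |sin (p / 2 * π * (x - (0 : ℕ)))| ≤ |p / 2 * π * (x - (0 : ℕ))| := abs_sin_le_abs
      _ = |p| / 2 * (π * x) := by
        rw [Nat.cast_zero, sub_zero, abs_mul, abs_mul, abs_div, abs_of_pos pi_pos,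
          abs_of_pos hx, abs_two]
        ring
  · push Not at h
    rw [Kp_eq_zero_of_forall_notMem h, abs_zero]
    positivity

lemma sq_max_zero_le_sq_abs (a : ℝ) : max 0 a ^ 2 ≤ |a| ^ 2 :=
  pow_le_pow_left₀ (le_max_left 0 a) (max_le (abs_nonneg a) (le_abs_self a)) 2

lemma integrableOn_sq_max_zero_Kp (hσ : Monotone σ) (hσ1 : 0 < σ 1) :
    IntegrableOn (fun x => max 0 (Kp p σ x) ^ 2) (Ioi 0) := by
  have hmeas : AEStronglyMeasurable (fun x => max 0 (Kp p σ x) ^ 2) :=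
    ((measurable_const.max (measurable_Kp hσ p)).pow_const 2).aestronglyMeasurable
  rw [← Ioc_union_Ioi_eq_Ioi hσ1.le]
  refine IntegrableOn.union (Measure.integrableOn_of_bounded (M := (|p| / 2) ^ 2)
    measure_Ioc_lt_top.ne hmeas ?_) ?_
  · filter_upwards [ae_restrict_mem measurableSet_Ioc] with x hx
    rw [Real.norm_of_nonneg (sq_nonneg _)]
    exact (sq_max_zero_le_sq_abs _).trans
      (pow_le_pow_left₀ (abs_nonneg _) (abs_Kp_le_abs_div_two hσ hx.1 hx.2) 2)
  · refine Integrable.mono' ((integrableOn_Ioi_rpow_of_lt (by norm_num : (-2 : ℝ) < -1)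
      hσ1).const_mul (π⁻¹ ^ 2)) hmeas.restrict ?_
    filter_upwards [ae_restrict_mem measurableSet_Ioi] with x hx
    have hx0 : 0 < x := hσ1.trans hx
    rw [Real.norm_of_nonneg (sq_nonneg _), rpow_neg hx0.le, rpow_two, ← inv_pow, ← mul_pow,
      ← mul_inv]
    exact (sq_max_zero_le_sq_abs _).trans
      (pow_le_pow_left₀ (abs_nonneg _) (abs_Kp_le_inv hσ hx0) 2)

lemma Ep_sub_Ep_eq_setIntegral (hσ : Monotone σ) (hσ' : Monotone σ') (hσ1 : 0 < σ 1)
    (hσ'1 : 0 < σ' 1) {a b : ℝ} (ha : 0 < a) (heq : ∀ x ∉ Icc a b, Kp p σ' x = Kp p σ x) :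
    Ep p σ' - Ep p σ = ∫ x in Ioo a b, (max 0 (Kp p σ' x) ^ 2 - max 0 (Kp p σ x) ^ 2) := by
  rw [Ep, Ep, ← integral_sub (integrableOn_sq_max_zero_Kp hσ' hσ'1)
    (integrableOn_sq_max_zero_Kp hσ hσ1), ← integral_Icc_eq_integral_Ioo]
  exact setIntegral_eq_of_subset_of_forall_sdiff_eq_zero measurableSet_Ioi
    (fun x hx => ha.trans_le hx.1) fun x hx => by rw [heq x hx.2, sub_self]

end Kernel

section Update

variable {τ : ℕ → ℝ} {n : ℕ} {a : ℝ}

lemma StrictMono.update_succ (hτ : StrictMono τ) (hna : τ n < a) (han : a < τ (n + 2)) :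
    StrictMono (Function.update τ (n + 1) a) := by
  refine strictMono_nat_of_lt_succ fun k => ?_
  rcases eq_or_ne k n with rfl | hkn
  · simpa using hna
  rcases eq_or_ne k (n + 1) with rfl | hkn1
  · simpa using han
  · rw [Function.update_of_ne hkn1, Function.update_of_ne (by omega)]
    exact hτ (Nat.lt_succ_self k)

lemma Kp_update_succ_eq {p x : ℝ} (ha : a ≤ τ (n + 1)) (hx : x ∉ Icc a (τ (n + 1))) :
    Kp p (Function.update τ (n + 1) a) x = Kp p τ x := by
  refine Kp_congr fun k => ?_
  rcases eq_or_ne k (n + 1) with rfl | hk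
  · rw [mem_Icc, not_and_or, not_le, not_le] at hx
    rw [Function.update_self]
    rcases hx with hx | hx <;> constructor <;> constructor <;> intro <;> linarith
  · simp only [Function.update_of_ne hk, iff_self, and_self]

end Update

noncomputable def posSinSq (p t : ℝ) : ℝ := max 0 (sin (p / 2 * π * t)) ^ 2

lemma sq_max_zero_Kp_eq {p : ℝ} {σ : ℕ → ℝ} (hσ : Monotone σ) {k : ℕ} {x : ℝ}
    (hx : x ∈ Ioo (σ k) (σ (k + 1))) (hx0 : 0 < x) :
    max 0 (Kp p σ x) ^ 2 = posSinSq p (x - k) / (π * x) ^ 2 := by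
  have hπx : 0 < π * x := by positivity
  rw [Kp_eq_of_mem_Ioo hσ hx, posSinSq, ← div_pow, ← max_div_div_right hπx.le, zero_div]

lemma IntervalAtLevel.sin_sub_eq {p : ℝ} {n : ℕ} {ξ : ℝ} (hp : 0 < p)
    (hI : IntervalAtLevel p n ξ) (y : ℝ) :
    sin (p / 2 * π * (y - n)) = sin (p / 2 * π * (y - ξ)) := by
  obtain ⟨_, _, hcomp⟩ := hI
  set θ := p / 2 * π * (ξ - n)
  have hξ : ξ < ξ + 2 / p := lt_add_of_pos_right ξ (by positivity)
  have hpos : ∀ y ∈ Ioo ξ (ξ + 2 / p), 0 < sin (p / 2 * π * (y - n)) := by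
    rw [← hcomp]
    exact fun y hy => connectedComponentIn_subset {y : ℝ | 0 < sin (p / 2 * π * (y - n))} _ hy
  have hnonneg : ∀ y ∈ Icc ξ (ξ + 2 / p), 0 ≤ sin (p / 2 * π * (y - n)) := by
    rw [← closure_Ioo hξ.ne]
    exact fun y hy => closure_minimal (fun z hz => (hpos z hz).le)
      (isClosed_le continuous_const
      (by fun_prop : Continuous fun z : ℝ => sin (p / 2 * π * (z - n)))) hy
  -- `sin` is `≥ 0` at the two ends, half a period apart, and `> 0` at the midpoint, so
  -- `sin θ = 0` and `cos θ = 1`.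
  have hleft : 0 ≤ sin θ := hnonneg ξ ⟨le_rfl, hξ.le⟩
  have hright : 0 ≤ sin (θ + π) := by
    convert hnonneg (ξ + 2 / p) ⟨hξ.le, le_rfl⟩ using 2
    field_simp
    ring
  have hmid : 0 < sin (θ + π / 2) := by
    convert hpos (ξ + 1 / p) ⟨by simpa using hp, by gcongr; norm_num⟩ using 2
    field_simp
    ring
  rw [sin_add_pi] at hright
  rw [sin_add_pi_div_two] at hmid
  have hsin : sin θ = 0 := by linarith
  have hcos : cos θ = 1 := by nlinarith [sin_sq_add_cos_sq θ]
  rw [show p / 2 * π * (y - n) = p / 2 * π * (y - ξ) + θ by ring, sin_add, hsin, hcos]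
  ring

lemma IntervalAtLevel.posSinSq_sub_eq {p : ℝ} {n : ℕ} {ξ : ℝ} (hp : 0 < p)
    (hI : IntervalAtLevel p n ξ) (y : ℝ) : posSinSq p (y - n) = posSinSq p (y - ξ) := by
  rw [posSinSq, posSinSq, hI.sin_sub_eq hp]

lemma sq_max_zero_Kp_sub_eq {p ξ x : ℝ} {n : ℕ} {σ σ' : ℕ → ℝ} (hp : 0 < p)
    (hI : IntervalAtLevel p n ξ) (hσ : Monotone σ) (hσ' : Monotone σ')
    (hx : x ∈ Ioo (σ n) (σ (n + 1))) (hx' : x ∈ Ioo (σ' (n + 1)) (σ' (n + 1 + 1))) (hx0 : 0 < x) :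
    max 0 (Kp p σ' x) ^ 2 - max 0 (Kp p σ x) ^ 2
      = (posSinSq p (x - ξ - 1) - posSinSq p (x - ξ)) / (π * x) ^ 2 := by
  rw [sq_max_zero_Kp_eq hσ' hx' hx0, sq_max_zero_Kp_eq hσ hx hx0, sub_div, hI.posSinSq_sub_eq hp,
    Nat.cast_succ, ← sub_sub, sub_right_comm, hI.posSinSq_sub_eq hp, sub_right_comm]

section PosSinSq

variable {p : ℝ}

@[fun_prop]
lemma continuous_posSinSq (p : ℝ) : Continuous (posSinSq p) := by
  unfold posSinSq
  fun_prop

lemma posSinSq_nonneg (p t : ℝ) : 0 ≤ posSinSq p t := sq_nonneg _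

lemma posSinSq_periodic (hp : p ≠ 0) : Function.Periodic (posSinSq p) (4 / p) := by
  intro t
  rw [posSinSq, posSinSq, show p / 2 * π * (t + 4 / p) = p / 2 * π * t + 2 * π by
    field_simp; ring, sin_add_two_pi]

lemma integral_posSinSq_comp_sub (hp : p ≠ 0) (a c : ℝ) :
    ∫ x in a..a + 4 / p, posSinSq p (x - c) = ∫ x in 0..0 + 4 / p, posSinSq p x := by
  rw [intervalIntegral.integral_comp_sub_right, add_sub_right_comm,
    (posSinSq_periodic hp).intervalIntegral_add_eq]

lemma sin_nonneg_of_mul_mem (k : ℤ) {t : ℝ} (h1 : 4 * k ≤ p * t) (h2 : p * t ≤ 4 * k + 2) :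
    0 ≤ sin (p / 2 * π * t) := by
  rw [show p / 2 * π * t = π / 2 * (p * t - 4 * k) + k * (2 * π) by ring, sin_add_int_mul_two_pi]
  exact sin_nonneg_of_nonneg_of_le_pi (by nlinarith [pi_pos]) (by nlinarith [pi_pos])

lemma sin_pos_of_mul_mem (k : ℤ) {t : ℝ} (h1 : 4 * k < p * t) (h2 : p * t < 4 * k + 2) :
    0 < sin (p / 2 * π * t) := by
  rw [show p / 2 * π * t = π / 2 * (p * t - 4 * k) + k * (2 * π) by ring, sin_add_int_mul_two_pi]
  exact sin_pos_of_pos_of_lt_pi (by nlinarith [pi_pos]) (by nlinarith [pi_pos])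

lemma sin_nonpos_of_mul_mem (k : ℤ) {t : ℝ} (h1 : 4 * k - 2 ≤ p * t) (h2 : p * t ≤ 4 * k) :
    sin (p / 2 * π * t) ≤ 0 := by
  rw [show p / 2 * π * t = π / 2 * (p * t - 4 * k) + k * (2 * π) by ring, sin_add_int_mul_two_pi]
  exact sin_nonpos_of_nonpos_of_neg_pi_le (by nlinarith [pi_pos]) (by nlinarith [pi_pos])

lemma posSinSq_eq_zero {t : ℝ} (h : sin (p / 2 * π * t) ≤ 0) : posSinSq p t = 0 := by
  rw [posSinSq, max_eq_left h, zero_pow two_ne_zero]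

lemma sin_sq_sub_sin_sq (x y : ℝ) : sin x ^ 2 - sin y ^ 2 = sin (x + y) * sin (x - y) := by
  rw [sin_add, sin_sub]
  nlinarith [sin_sq_add_cos_sq x, sin_sq_add_cos_sq y]

lemma posSinSq_sub_one_sub_posSinSq {u : ℝ} (h1 : 0 ≤ sin (p / 2 * π * (u - 1)))
    (h2 : 0 ≤ sin (p / 2 * π * u)) :
    posSinSq p (u - 1) - posSinSq p u = sin (p / 2 * π * (2 * u - 1)) * sin (p / 2 * π * (-1)) := by
  rw [posSinSq, posSinSq, max_eq_right h1, max_eq_right h2, sin_sq_sub_sin_sq]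
  ring_nf

lemma posSinSq_le_posSinSq_sub_one (hp4 : 4 < p) (hp6 : p ≤ 6) {u : ℝ} (h1 : 1 / 2 - 1 / p ≤ u)
    (h2 : u ≤ 4 / p) : posSinSq p u ≤ posSinSq p (u - 1) := by
  have hp : 0 < p := by linarith
  have hpu1 : p / 2 - 1 ≤ p * u := by
    have := mul_le_mul_of_nonneg_left h1 hp.le; field_simp at this; linarith
  have hpu2 : p * u ≤ 4 := by
    have := mul_le_mul_of_nonneg_left h2 hp.le; field_simp at this; linarith
  rcases le_total (p * u) 2 with hpu | hpu
  · have hdiff := posSinSq_sub_one_sub_posSinSq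
      (sin_nonneg_of_mul_mem (p := p) (t := u - 1) (-1) (by push_cast; linarith)
        (by push_cast; linarith))
      (sin_nonneg_of_mul_mem (t := u) 0 (by push_cast; linarith) (by push_cast; linarith))
    have hsum := sin_nonpos_of_mul_mem (p := p) (t := 2 * u - 1) 0 (by push_cast; linarith)
      (by push_cast; linarith)
    have hneg := sin_nonpos_of_mul_mem (p := p) (t := -1) (-1) (by push_cast; linarith)
      (by push_cast; linarith)
    nlinarith [mul_nonneg_of_nonpos_of_nonpos hsum hneg]
  · rw [posSinSq_eq_zero (sin_nonpos_of_mul_mem 1 (by push_cast; linarith)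
      (by push_cast; linarith))]
    exact posSinSq_nonneg _ _

lemma posSinSq_sub_one_le_posSinSq (hp4 : 4 < p) (hp6 : p ≤ 6) {u : ℝ} (h1 : 4 / p ≤ u)
    (h2 : u ≤ 1 / 2 + 3 / p) : posSinSq p (u - 1) ≤ posSinSq p u := by
  have hp : 0 < p := by linarith
  have hpu1 : 4 ≤ p * u := by
    have := mul_le_mul_of_nonneg_left h1 hp.le; field_simp at this; linarith
  have hpu2 : p * u ≤ p / 2 + 3 := by
    have := mul_le_mul_of_nonneg_left h2 hp.le; field_simp at this; linarith
  rcases le_total (p * u) p with hpu | hpu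
  · rw [posSinSq_eq_zero (sin_nonpos_of_mul_mem (p := p) (t := u - 1) 0 (by push_cast; linarith)
      (by push_cast; linarith))]
    exact posSinSq_nonneg _ _
  · have hdiff := posSinSq_sub_one_sub_posSinSq
      (sin_nonneg_of_mul_mem (p := p) (t := u - 1) 0 (by push_cast; linarith)
        (by push_cast; linarith))
      (sin_nonneg_of_mul_mem (t := u) 1 (by push_cast; linarith) (by push_cast; linarith))
    have hsum := sin_nonneg_of_mul_mem (p := p) (t := 2 * u - 1) 1 (by push_cast; linarith)
      (by push_cast; linarith)
    have hneg := sin_nonpos_of_mul_mem (p := p) (t := -1) (-1) (by push_cast; linarith)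
      (by push_cast; linarith)
    nlinarith [mul_nonpos_of_nonneg_of_nonpos hsum hneg]

lemma posSinSq_lt_posSinSq_sub_one (hp4 : 4 < p) (hp6 : p ≤ 6) {u : ℝ} (h1 : 2 / p < u)
    (h2 : u < 1 - 2 / p) : posSinSq p u < posSinSq p (u - 1) := by
  have hp : 0 < p := by linarith
  have hpu1 : 2 < p * u := by
    have := mul_lt_mul_of_pos_left h1 hp; field_simp at this; linarith
  have hpu2 : p * u < p - 2 := by
    have := mul_lt_mul_of_pos_left h2 hp; field_simp at this; linarith
  rw [posSinSq_eq_zero (sin_nonpos_of_mul_mem 1 (by push_cast; linarith) (by push_cast; linarith))]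
  exact pow_pos (lt_max_of_lt_right (sin_pos_of_mul_mem (-1) (by push_cast; linarith)
    (by push_cast; linarith))) 2

end PosSinSq

theorem intervalIntegral_mul_pos_of_strictAntiOn {f w : ℝ → ℝ} {a b c u v : ℝ}
    (hf : ContinuousOn f (Icc a c)) (hw : ContinuousOn w (Icc a c))
    (hw_anti : StrictAntiOn w (Icc a c)) (hau : a ≤ u) (huv : u < v) (hvb : v ≤ b) (hbc : b ≤ c)
    (hf_int : ∫ x in a..c, f x = 0) (hf_nonneg : ∀ x ∈ Icc a b, 0 ≤ f x)
    (hf_nonpos : ∀ x ∈ Icc b c, f x ≤ 0) (hf_pos : ∀ x ∈ Ioo u v, 0 < f x) :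
    0 < ∫ x in a..c, f x * w x := by
  have hac : a ≤ c := by linarith
  have hb : b ∈ Icc a c := ⟨by linarith, hbc⟩
  -- Subtracting `w b` does not change the integral, and makes the integrand nonnegative.
  set g := fun x => f x * (w x - w b)
  have hg_int : ∀ s ∈ Icc a c, ∀ t ∈ Icc a c, IntervalIntegrable g volume s t := fun s hs t ht =>
    ((hf.mul (hw.sub continuousOn_const)).mono (uIcc_subset_Icc hs ht)).intervalIntegrable
  have hg_eq : ∫ x in a..c, g x = ∫ x in a..c, f x * w x := by
    have hfw : IntervalIntegrable (fun x => f x * w x) volume a c :=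
      (hf.mul hw).intervalIntegrable_of_Icc hac
    have hfb : IntervalIntegrable (fun x => f x * w b) volume a c :=
      (hf.mul continuousOn_const).intervalIntegrable_of_Icc hac
    simp only [g, mul_sub]
    rw [intervalIntegral.integral_sub hfw hfb,
      intervalIntegral.integral_mul_const, hf_int, zero_mul, sub_zero]
  have hg_nonneg : ∀ x ∈ Icc a c, 0 ≤ g x := by
    intro x hx
    rcases le_total x b with hxb | hbx
    · exact mul_nonneg (hf_nonneg x ⟨hx.1, hxb⟩) (sub_nonneg.2 (hw_anti.antitoneOn hx hb hxb))
    · exact mul_nonneg_of_nonpos_of_nonpos (hf_nonpos x ⟨hbx, hx.2⟩)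
        (sub_nonpos.2 (hw_anti.antitoneOn hb hx hbx))
  have hu : u ∈ Icc a c := ⟨hau, by linarith⟩
  have hv : v ∈ Icc a c := ⟨by linarith, by linarith⟩
  have hleft : 0 ≤ ∫ x in a..u, g x := intervalIntegral.integral_nonneg hau fun x hx =>
    hg_nonneg x ⟨hx.1, by linarith [hx.2]⟩
  have hmid : 0 < ∫ x in u..v, g x := by
    refine intervalIntegral.intervalIntegral_pos_of_pos_on (hg_int u hu v hv) (fun x hx => ?_) huv
    have hx' : x ∈ Icc a c := ⟨by linarith [hx.1], by linarith [hx.2]⟩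
    exact mul_pos (hf_pos x hx) (sub_pos.2 (hw_anti hx' hb (by linarith [hx.2])))
  have hright : 0 ≤ ∫ x in v..c, g x := intervalIntegral.integral_nonneg (by linarith)
    fun x hx => hg_nonneg x ⟨by linarith [hx.1], hx.2⟩
  rw [← hg_eq, ← intervalIntegral.integral_add_adjacent_intervals (hg_int a ⟨le_rfl, hac⟩ u hu)
    (hg_int u hu c ⟨hac, le_rfl⟩), ← intervalIntegral.integral_add_adjacent_intervals
    (hg_int u hu v hv) (hg_int v hv c ⟨hac, le_rfl⟩)]
  linarith

lemma integral_posSinSq_sub_div_sq_pos {p ξ : ℝ} (hp4 : 4 < p) (hp6 : p ≤ 6)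
    (hm : 0 < ξ + 1 / 2 - 1 / p) :
    0 < ∫ x in (ξ + 1 / 2 - 1 / p)..(ξ + 1 / 2 - 1 / p + 4 / p),
      (posSinSq p (x - ξ - 1) - posSinSq p (x - ξ)) / (π * x) ^ 2 := by
  have hp : p ≠ 0 := by positivity
  have h1p : 1 / 6 ≤ 1 / p := one_div_le_one_div_of_le (by positivity) hp6
  have h1p' : 1 / p < 1 / 4 := one_div_lt_one_div_of_lt (by norm_num) hp4
  have h2p : 2 / p = 2 * (1 / p) := by ring
  have h3p : 3 / p = 3 * (1 / p) := by ring
  have h4p : 4 / p = 4 * (1 / p) := by ring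
  simp_rw [div_eq_mul_inv (_ - _)]
  refine intervalIntegral_mul_pos_of_strictAntiOn (b := ξ + 4 / p) (u := ξ + 2 / p)
    (v := ξ + 1 - 2 / p) (Continuous.continuousOn (by fun_prop)) ?_ ?_ (by linarith)
    (by linarith) (by linarith) (by linarith) ?_ ?_ ?_ ?_
  · refine ContinuousOn.inv₀ (by fun_prop) fun x hx => ?_
    have : 0 < x := by linarith [hx.1]
    positivity
  · intro x hx y hy hxy
    have : 0 < x := by linarith [hx.1]
    show ((π * y) ^ 2)⁻¹ < ((π * x) ^ 2)⁻¹
    gcongr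
  · rw [intervalIntegral.integral_sub (Continuous.intervalIntegrable (by fun_prop) _ _)
      (Continuous.intervalIntegrable (by fun_prop) _ _)]
    simp only [sub_sub, integral_posSinSq_comp_sub hp, sub_self]
  · exact fun x hx => sub_nonneg.2 (posSinSq_le_posSinSq_sub_one hp4 hp6 (by linarith [hx.1])
      (by linarith [hx.2]))
  · exact fun x hx => sub_nonpos.2 (posSinSq_sub_one_le_posSinSq hp4 hp6 (by linarith [hx.1])
      (by linarith [hx.2]))
  · exact fun x hx => sub_pos.2 (posSinSq_lt_posSinSq_sub_one hp4 hp6 (by linarith [hx.1])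
      (by linarith [hx.2]))

theorem stmt15_general (p δ₁ δ₂ : ℝ) (n : ℕ) (ξ : ℝ) (τ γ : ℕ → ℝ)
    (hp4 : 4 < p) (hp6 : p ≤ 6)
    (hI : IntervalAtLevel p n ξ) (hξ : 0 < ξ)
    (hτ : τ ∈ Tset δ₁ δ₂)
    (hτn : τ n ≤ ξ)
    (hτn1 : τ (n + 1) = (ξ + 1 / 2 - 1 / p) + 4 / p)
    (hτn2 : ξ + 1 + 2 / p ≤ τ (n + 2))
    (hγ : γ (n + 1) = ξ + 1 / 2 - 1 / p)
    (hγk : ∀ k : ℕ, k ≠ n + 1 → γ k = τ k) :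
    Ep p τ < Ep p γ := by
  obtain ⟨hτ0, hτmono, -, -⟩ := hτ
  set m := ξ + 1 / 2 - 1 / p with hm
  have hp : 0 < p := by linarith
  have h4p : 0 < 4 / p := by positivity
  have h1p : 1 / p < 1 / 4 := one_div_lt_one_div_of_lt (by norm_num) hp4
  have hτn2' : m + 4 / p ≤ τ (n + 2) := by
    linarith [show 2 / p = 2 * (1 / p) by ring, show 4 / p = 4 * (1 / p) by ring]
  have hγ_eq : γ = Function.update τ (n + 1) m := funext fun k => by
    rcases eq_or_ne k (n + 1) with rfl | hk
    · rw [hγ, Function.update_self]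
    · rw [hγk k hk, Function.update_of_ne hk]
  have hγmono : StrictMono γ := hγ_eq ▸ hτmono.update_succ (by linarith) (by linarith)
  have hτ1 : 0 < τ 1 := hτ0 ▸ hτmono zero_lt_one
  have hγ1 : 0 < γ 1 := ((hγk 0 (by omega)).trans hτ0) ▸ hγmono zero_lt_one
  rw [← sub_pos, Ep_sub_Ep_eq_setIntegral hτmono.monotone hγmono.monotone hτ1 hγ1 (by linarith)
    fun x hx => hγ_eq ▸ Kp_update_succ_eq (by linarith) (hτn1 ▸ hx),
    setIntegral_congr_fun measurableSet_Ioo fun x hx => sq_max_zero_Kp_sub_eq hp hI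
      hτmono.monotone hγmono.monotone ⟨by linarith [hx.1], hτn1 ▸ hx.2⟩
      ⟨hγ ▸ hx.1, hγk (n + 2) (by omega) ▸ hx.2.trans_le hτn2'⟩ (by linarith [hx.1]),
    ← integral_Ioc_eq_integral_Ioo, ← intervalIntegral.integral_of_le (by linarith)]
  exact integral_posSinSq_sub_div_sq_pos hp4 hp6 (by linarith)

theorem stmt15 (p δ₁ δ₂ : ℝ) (n : ℕ) (ξ : ℝ) (τ γ : ℕ → ℝ)
    (hp4 : 4 < p) (hp6 : p ≤ 6)
    (hδ1 : 0 < δ₁) (hδ1' : δ₁ ≤ 1 / 2 + 3 / p) (hδ2 : 0 < δ₂) (hδ2' : δ₂ ≤ 1)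
    (hI : IntervalAtLevel p n ξ) (hξ : 0 < ξ)
    (hτ : τ ∈ Tset δ₁ δ₂)
    (hτn : τ n ≤ ξ)
    (hτn1 : τ (n + 1) = (ξ + 1 / 2 - 1 / p) + 4 / p)
    (hτn2 : ξ + 1 + 2 / p ≤ τ (n + 2))
    (hγ : γ (n + 1) = ξ + 1 / 2 - 1 / p)
    (hγk : ∀ k : ℕ, k ≠ n + 1 → γ k = τ k) :
    Ep p τ < Ep p γ :=
  stmt15_general p δ₁ δ₂ n ξ τ γ hp4 hp6 hI hξ hτ hτn hτn1 hτn2 hγ hγk
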